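/- arXiv:math/0308273 — 2 statements merged into one kernel-verified Lean document; each statement's English description precedes it below -/
import Mathlib

section
/- Let H be an inner product space over ℂ, x, y ∈ H, γ, Γ ∈ ℂ with Re(Γ·conj(γ)) > 0. If Re⟨Γy − x, x − γy⟩ ≥ 0, then 0 ≤ ‖x‖²‖y‖² − |⟨x,y⟩|² ≤ (1/4)·(|Γ − γ|² / Re(Γ·conj(γ)))·|⟨x,y⟩|². -/
/-!
Expanding the hypothesis gives `‖x‖² + Re(Γ γ̄) ‖y‖² ≤ Re((Γ + γ)⟪x, y⟫) ≤ |Γ + γ| |⟪x, y⟫|`.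
Squaring, and using `(a + d b)² ≥ 4 d a b` (AM-GM), yields
`4 Re(Γ γ̄) ‖x‖² ‖y‖² ≤ |Γ + γ|² |⟪x, y⟫|²`, and `|Γ + γ|² = |Γ - γ|² + 4 Re(Γ γ̄)` turns this
into the reverse Cauchy–Schwarz bound.
-/

open scoped InnerProductSpace ComplexConjugate

namespace Complex

theorem sq_norm_add_eq_sq_norm_sub_add (z w : ℂ) :
    ‖z + w‖ ^ 2 = ‖z - w‖ ^ 2 + 4 * (z * conj w).re := by
  rw [Complex.sq_norm, Complex.sq_norm, normSq_add, normSq_sub]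
  ring

end Complex

section InnerProductSpace

variable {E : Type*} [NormedAddCommGroup E] [InnerProductSpace ℂ E]

theorem re_inner_smul_sub_sub_smul (x y : E) (γ Γ : ℂ) :
    (⟪Γ • y - x, x - γ • y⟫_ℂ).re =
      ((Γ + γ) * ⟪x, y⟫_ℂ).re - (Γ * conj γ).re * ‖y‖ ^ 2 - ‖x‖ ^ 2 := by
  have hxx : ⟪x, x⟫_ℂ = ((‖x‖ ^ 2 : ℝ) : ℂ) := by simp [inner_self_eq_norm_sq_to_K]
  have hyy : ⟪y, y⟫_ℂ = ((‖y‖ ^ 2 : ℝ) : ℂ) := by simp [inner_self_eq_norm_sq_to_K]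
  simp only [inner_sub_left, inner_sub_right, inner_smul_left, inner_smul_right, hxx, hyy,
    ← inner_conj_symm x y]
  simp only [Complex.add_re, Complex.add_im, Complex.sub_re, Complex.sub_im, Complex.mul_re,
    Complex.mul_im, Complex.conj_re, Complex.conj_im, Complex.ofReal_re, Complex.ofReal_im]
  ring

theorem four_mul_re_mul_sq_norm_mul_sq_norm_le {x y : E} {γ Γ : ℂ}
    (hΓγ : 0 ≤ (Γ * conj γ).re) (h : 0 ≤ (⟪Γ • y - x, x - γ • y⟫_ℂ).re) :
    4 * (Γ * conj γ).re * (‖x‖ ^ 2 * ‖y‖ ^ 2) ≤ ‖Γ + γ‖ ^ 2 * ‖⟪x, y⟫_ℂ‖ ^ 2 := by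
  set d := (Γ * conj γ).re
  have hsum : ‖x‖ ^ 2 + d * ‖y‖ ^ 2 ≤ ‖Γ + γ‖ * ‖⟪x, y⟫_ℂ‖ :=
    calc ‖x‖ ^ 2 + d * ‖y‖ ^ 2 ≤ ((Γ + γ) * ⟪x, y⟫_ℂ).re := by
          linarith [re_inner_smul_sub_sub_smul x y γ Γ]
      _ ≤ ‖(Γ + γ) * ⟪x, y⟫_ℂ‖ := Complex.re_le_norm _
      _ = ‖Γ + γ‖ * ‖⟪x, y⟫_ℂ‖ := norm_mul _ _
  calc 4 * d * (‖x‖ ^ 2 * ‖y‖ ^ 2) ≤ (‖x‖ ^ 2 + d * ‖y‖ ^ 2) ^ 2 := by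
        nlinarith [sq_nonneg (‖x‖ ^ 2 - d * ‖y‖ ^ 2)]
    _ ≤ (‖Γ + γ‖ * ‖⟪x, y⟫_ℂ‖) ^ 2 := pow_le_pow_left₀ (by positivity) hsum 2
    _ = ‖Γ + γ‖ ^ 2 * ‖⟪x, y⟫_ℂ‖ ^ 2 := mul_pow _ _ _

end InnerProductSpace

theorem stmt_10 {E : Type*} [NormedAddCommGroup E] [InnerProductSpace ℂ E]
    (x y : E) (γ Γ : ℂ) (hΓγ : 0 < (Γ * conj γ).re)
    (h : 0 ≤ (⟪Γ • y - x, x - γ • y⟫_ℂ).re) :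
    0 ≤ ‖x‖ ^ 2 * ‖y‖ ^ 2 - ‖⟪x, y⟫_ℂ‖ ^ 2 ∧
      ‖x‖ ^ 2 * ‖y‖ ^ 2 - ‖⟪x, y⟫_ℂ‖ ^ 2 ≤
        (1 / 4) * (‖Γ - γ‖ ^ 2 / (Γ * conj γ).re) * ‖⟪x, y⟫_ℂ‖ ^ 2 := by
  have hCS : ‖⟪x, y⟫_ℂ‖ ^ 2 ≤ ‖x‖ ^ 2 * ‖y‖ ^ 2 := by
    rw [← mul_pow]
    exact pow_le_pow_left₀ (norm_nonneg _) (norm_inner_le_norm x y) 2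
  refine ⟨sub_nonneg.mpr hCS, ?_⟩
  have key := four_mul_re_mul_sq_norm_mul_sq_norm_le hΓγ.le h
  rw [Complex.sq_norm_add_eq_sq_norm_sub_add] at key
  rw [mul_div_assoc', div_mul_eq_mul_div, le_div_iff₀ hΓγ]
  linarith
end

section
/- Let H be a Hilbert space, (eᵢ)_{i∈ℕ} an orthonormal sequence, (λᵢ), (μᵢ) ∈ ℓ², and r₁, r₂ > 0 with ∑|λᵢ|² > r₁² and ∑|μᵢ|² > r₂². If x, y ∈ H satisfy ‖x − ∑λᵢeᵢ‖ ≤ r₁ and ‖y − ∑μᵢeᵢ‖ ≤ r₂, then |⟨x,y⟩ − ∑⟨x,eᵢ⟩⟨eᵢ,y⟩| ≤ (r₁r₂ / (√(∑|λᵢ|² − r₁²)·√(∑|μᵢ|² − r₂²)))·√(∑|⟨x,eᵢ⟩|²·∑|⟨y,eᵢ⟩|²). -/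
open scoped InnerProductSpace

/-!
Let `P x = ∑ ⟪eᵢ, x⟫ eᵢ` be the orthogonal projection onto the closed span `K` of the `eᵢ`.
Then `⟪x, y⟫ - ∑ ⟪x, eᵢ⟫⟪eᵢ, y⟫ = ⟪x - P x, y - P y⟫` and `∑ ‖⟪x, eᵢ⟫‖² = ‖P x‖²`.
As `s ∈ K`, Pythagoras gives `‖x - P x‖² + ‖P x - s‖² ≤ r₁²`; together with
`‖s‖ ≤ ‖P x‖ + ‖P x - s‖` a two-dimensional Cauchy–Schwarz inequality yields
`‖x - P x‖ √(‖s‖² - r₁²) ≤ r₁ ‖P x‖`, i.e. the ball `B(s, r₁)` lies in a cone around `K`.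
Multiplying this with the same bound for `y` and applying Cauchy–Schwarz to `⟪x - P x, y - P y⟫`
gives the claim.
-/

theorem mul_sqrt_sq_sub_sq_add_mul_le {q d r S : ℝ} (hr : 0 ≤ r) (hS : 0 ≤ S)
    (hqd : q ^ 2 + d ^ 2 ≤ r ^ 2) (hrS : r ^ 2 ≤ S ^ 2) :
    q * √(S ^ 2 - r ^ 2) + r * d ≤ r * S := by
  set a := √(S ^ 2 - r ^ 2)
  have ha : a ^ 2 = S ^ 2 - r ^ 2 := Real.sq_sqrt (by linarith)
  -- Cauchy–Schwarz for `(q, d)` and `(a, r)`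
  have hcs : (q * a + r * d) ^ 2 ≤ (r * S) ^ 2 := by
    nlinarith [sq_nonneg (q * r - d * a), mul_le_mul_of_nonneg_right hqd (sq_nonneg S)]
  exact abs_le_of_sq_le_sq' hcs (by positivity) |>.2

section

variable {ι 𝕜 E : Type*} [RCLike 𝕜] [NormedAddCommGroup E] [InnerProductSpace 𝕜 E]

theorem inner_eq_zero_of_hasSum {f : ι → E} {w z : E} (hw : HasSum f w)
    (hz : ∀ i, ⟪z, f i⟫_𝕜 = 0) : ⟪z, w⟫_𝕜 = 0 := by
  have h := hw.mapL (innerSL 𝕜 z)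
  simp only [innerSL_apply_apply, hz] at h
  exact h.unique hasSum_zero

theorem norm_sub_le_div_sqrt_mul_norm {x p s : E} {r : ℝ} (horth : ⟪x - p, p - s⟫_𝕜 = 0)
    (hx : ‖x - s‖ ≤ r) (hrs : r ^ 2 < ‖s‖ ^ 2) :
    ‖x - p‖ ≤ r / √(‖s‖ ^ 2 - r ^ 2) * ‖p‖ := by
  have hr : 0 ≤ r := (norm_nonneg _).trans hx
  have hpyth : ‖x - p‖ ^ 2 + ‖p - s‖ ^ 2 ≤ r ^ 2 := by
    simp only [sq]
    rw [← norm_add_sq_eq_norm_sq_add_norm_sq_of_inner_eq_zero _ _ horth, sub_add_sub_cancel]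
    exact mul_self_le_mul_self (norm_nonneg _) hx
  have hs : ‖s‖ ≤ ‖p‖ + ‖p - s‖ := by
    simpa using norm_sub_le p (p - s)
  have key := mul_sqrt_sq_sub_sq_add_mul_le hr (norm_nonneg s) hpyth hrs.le
  rw [div_mul_eq_mul_div, le_div_iff₀ (Real.sqrt_pos.2 (by linarith))]
  nlinarith

variable (𝕜) in
/-- For complete `E` and orthonormal `e`, the orthogonal projection onto the closed span of `e`. -/
noncomputable def besselProj (e : ι → E) (x : E) : E :=
  ∑' i, ⟪e i, x⟫_𝕜 • e i

namespace Orthonormal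

variable {e : ι → E} (he : Orthonormal 𝕜 e)
include he

theorem inner_left_eq_of_hasSum {c : ι → 𝕜} {w : E} (hw : HasSum (fun i => c i • e i) w)
    (j : ι) : ⟪e j, w⟫_𝕜 = c j := by
  classical
  have h := hw.mapL (innerSL 𝕜 (e j))
  simp only [innerSL_apply_apply, inner_smul_right, orthonormal_iff_ite.mp he, mul_ite, mul_one,
    mul_zero] at h
  simpa using h.unique (hasSum_single (f := fun i => if j = i then c i else 0) j
    fun i hi => if_neg hi.symm)

theorem hasSum_norm_sq_of_hasSum {c : ι → 𝕜} {w : E} (hw : HasSum (fun i => c i • e i) w) :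
    HasSum (fun i => ‖c i‖ ^ 2) (‖w‖ ^ 2) := by
  have hsum : ∀ s : Finset ι, ‖∑ i ∈ s, c i • e i‖ ^ 2 = ∑ i ∈ s, ‖c i‖ ^ 2 := by
    simpa [LinearIsometry.toSpanSingleton_apply] using he.orthogonalFamily.norm_sum c
  simpa only [HasSum, hsum] using hw.norm.pow 2

variable [CompleteSpace E]

theorem hasSum_besselProj (x : E) :
    HasSum (fun i => ⟪e i, x⟫_𝕜 • e i) (besselProj 𝕜 e x) := by
  refine Summable.hasSum ?_
  have := (he.orthogonalFamily.summable_iff_norm_sq_summable _).2 (he.inner_products_summable x)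
  simpa [LinearIsometry.toSpanSingleton_apply] using this

theorem inner_sub_besselProj_eq_zero (x : E) (j : ι) : ⟪x - besselProj 𝕜 e x, e j⟫_𝕜 = 0 := by
  rw [← inner_conj_symm, inner_sub_right, he.inner_left_eq_of_hasSum (he.hasSum_besselProj x),
    sub_self, map_zero]

theorem norm_besselProj_sq (x : E) : ‖besselProj 𝕜 e x‖ ^ 2 = ∑' i, ‖⟪x, e i⟫_𝕜‖ ^ 2 := by
  simp_rw [(he.hasSum_norm_sq_of_hasSum (he.hasSum_besselProj x)).tsum_eq.symm, norm_inner_symm]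

theorem inner_sub_tsum_inner_mul_inner (x y : E) :
    ⟪x, y⟫_𝕜 - ∑' i, ⟪x, e i⟫_𝕜 * ⟪e i, y⟫_𝕜 =
      ⟪x - besselProj 𝕜 e x, y - besselProj 𝕜 e y⟫_𝕜 := by
  have hperp : ⟪x - besselProj 𝕜 e x, besselProj 𝕜 e y⟫_𝕜 = 0 :=
    inner_eq_zero_of_hasSum (he.hasSum_besselProj y) fun i => by
      rw [inner_smul_right, he.inner_sub_besselProj_eq_zero, mul_zero]
  have hproj : HasSum (fun i => ⟪x, e i⟫_𝕜 * ⟪e i, y⟫_𝕜) ⟪besselProj 𝕜 e x, y⟫_𝕜 := by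
    have h := ((he.hasSum_besselProj x).mapL (innerSL 𝕜 y)).map (starRingEnd 𝕜)
      RCLike.continuous_conj
    simpa [Function.comp_def, inner_smul_right, inner_conj_symm, mul_comm] using h
  rw [inner_sub_right, hperp, sub_zero, inner_sub_left, hproj.tsum_eq]

theorem norm_sub_besselProj_le {l : ι → 𝕜} {s x : E} {r : ℝ}
    (hs : HasSum (fun i => l i • e i) s) (hx : ‖x - s‖ ≤ r) (hr : r ^ 2 < ∑' i, ‖l i‖ ^ 2) :
    ‖x - besselProj 𝕜 e x‖ ≤ r / √((∑' i, ‖l i‖ ^ 2) - r ^ 2) * ‖besselProj 𝕜 e x‖ := by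
  rw [(he.hasSum_norm_sq_of_hasSum hs).tsum_eq] at hr ⊢
  have hps : HasSum (fun i => (⟪e i, x⟫_𝕜 - l i) • e i) (besselProj 𝕜 e x - s) := by
    simpa only [sub_smul] using (he.hasSum_besselProj x).sub hs
  refine norm_sub_le_div_sqrt_mul_norm (𝕜 := 𝕜) (inner_eq_zero_of_hasSum hps fun i => ?_) hx hr
  rw [inner_smul_right, he.inner_sub_besselProj_eq_zero, mul_zero]

end Orthonormal

end

theorem stmt_19_general {𝕜 E : Type*} [RCLike 𝕜] [NormedAddCommGroup E] [InnerProductSpace 𝕜 E]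
    [CompleteSpace E] (e : ℕ → E) (he : Orthonormal 𝕜 e) (l μ : ℕ → 𝕜)
    (r₁ r₂ : ℝ)
    (hlr : r₁ ^ 2 < ∑' i, ‖l i‖ ^ 2) (hμr : r₂ ^ 2 < ∑' i, ‖μ i‖ ^ 2)
    (s t : E) (hs : HasSum (fun i => l i • e i) s) (ht : HasSum (fun i => μ i • e i) t)
    (x y : E) (hx : ‖x - s‖ ≤ r₁) (hy : ‖y - t‖ ≤ r₂) :
    ‖⟪x, y⟫_𝕜 - ∑' i, ⟪x, e i⟫_𝕜 * ⟪e i, y⟫_𝕜‖ ≤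
      (r₁ * r₂ / (Real.sqrt ((∑' i, ‖l i‖ ^ 2) - r₁ ^ 2) *
        Real.sqrt ((∑' i, ‖μ i‖ ^ 2) - r₂ ^ 2))) *
        Real.sqrt ((∑' i, ‖⟪x, e i⟫_𝕜‖ ^ 2) * ∑' i, ‖⟪y, e i⟫_𝕜‖ ^ 2) := by
  have hbx := he.norm_sub_besselProj_le hs hx hlr
  have hby := he.norm_sub_besselProj_le ht hy hμr
  rw [he.inner_sub_tsum_inner_mul_inner, ← he.norm_besselProj_sq x, ← he.norm_besselProj_sq y,
    Real.sqrt_mul (sq_nonneg _), Real.sqrt_sq (norm_nonneg _), Real.sqrt_sq (norm_nonneg _)]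
  calc _ ≤ ‖x - besselProj 𝕜 e x‖ * ‖y - besselProj 𝕜 e y‖ := norm_inner_le_norm _ _
    _ ≤ _ * _ := mul_le_mul hbx hby (norm_nonneg _) ((norm_nonneg _).trans hbx)
    _ = _ := by ring

theorem stmt_19 {𝕜 E : Type*} [RCLike 𝕜] [NormedAddCommGroup E] [InnerProductSpace 𝕜 E]
    [CompleteSpace E] (e : ℕ → E) (he : Orthonormal 𝕜 e) (l μ : ℕ → 𝕜)
    (hl : Summable fun i => ‖l i‖ ^ 2) (hμ : Summable fun i => ‖μ i‖ ^ 2)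
    (r₁ r₂ : ℝ) (hr₁ : 0 < r₁) (hr₂ : 0 < r₂)
    (hlr : r₁ ^ 2 < ∑' i, ‖l i‖ ^ 2) (hμr : r₂ ^ 2 < ∑' i, ‖μ i‖ ^ 2)
    (s t : E) (hs : HasSum (fun i => l i • e i) s) (ht : HasSum (fun i => μ i • e i) t)
    (x y : E) (hx : ‖x - s‖ ≤ r₁) (hy : ‖y - t‖ ≤ r₂) :
    ‖⟪x, y⟫_𝕜 - ∑' i, ⟪x, e i⟫_𝕜 * ⟪e i, y⟫_𝕜‖ ≤
      (r₁ * r₂ / (Real.sqrt ((∑' i, ‖l i‖ ^ 2) - r₁ ^ 2) *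
        Real.sqrt ((∑' i, ‖μ i‖ ^ 2) - r₂ ^ 2))) *
        Real.sqrt ((∑' i, ‖⟪x, e i⟫_𝕜‖ ^ 2) * ∑' i, ‖⟪y, e i⟫_𝕜‖ ^ 2) :=
  stmt_19_general e he l μ r₁ r₂ hlr hμr s t hs ht x y hx hy
end
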